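/- Let m ≥ 1 and s ≥ 0 be integers with s < m and m + s even. Let Tr : F_{2^m} → F_2 denote the absolute trace, and for t ∈ F_2 write (−1)^t ∈ ℤ for 1 if t = 0 and −1 if t = 1. Let h : F_{2^m} → F_{2^m} satisfy h(0) = 0 and be vectorial s-plateaued, i.e. for every b ∈ F_{2^m} \ {0} and every c ∈ F_{2^m}, (Σ_{y ∈ F_{2^m}} (−1)^{Tr(b·h(y) + c·y)})² ∈ {0, 2^{m+s}}. Then the number of triples (a,b,c) ∈ F_2 × F_{2^m}² such that #{y ∈ F_{2^m} : a + Tr(b·h(y) + c·y) = 1} = 2^{m-1} − 2^{(m+s-2)/2} equals 2^{2m-s} − 2^{m-s}. -/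
import Mathlib

def sgn (t : ZMod 2) : ℤ := if t = 0 then 1 else -1

lemma sgn_add : ∀ (t u : ZMod 2), sgn (t + u) = sgn t * sgn u := by decide

section
variable (K : Type) [Field K] [Fintype K] [DecidableEq K] [Algebra (ZMod 2) K]

lemma charsum0 (u : K) (hu : u ≠ 0) :
    ∑ x : K, sgn (Algebra.trace (ZMod 2) K (x * u)) = 0 := by
  have hfd : FiniteDimensional (ZMod 2) K := Module.Finite.of_finite
  obtain ⟨e, he⟩ := Algebra.trace_surjective (ZMod 2) K 1
  have h1 : ∑ x : K, sgn (Algebra.trace (ZMod 2) K x) = 0 := by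
    have h2 : ∑ x : K, sgn (Algebra.trace (ZMod 2) K (x + e))
        = ∑ x : K, sgn (Algebra.trace (ZMod 2) K x) :=
      Fintype.sum_equiv (Equiv.addRight e) _ _ (fun x => rfl)
    have h3 : ∀ x : K, sgn (Algebra.trace (ZMod 2) K (x + e))
        = - sgn (Algebra.trace (ZMod 2) K x) := by
      intro x
      rw [map_add, he]
      have ht : ∀ t : ZMod 2, sgn (t + 1) = - sgn t := by decide
      exact ht _
    rw [Finset.sum_congr rfl (fun x _ => h3 x), Finset.sum_neg_distrib] at h2
    linarith
  calc ∑ x : K, sgn (Algebra.trace (ZMod 2) K (x * u))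
      = ∑ x : K, sgn (Algebra.trace (ZMod 2) K x) :=
        Fintype.sum_equiv (Equiv.mulRight₀ u hu) _ _ (fun x => rfl)
    _ = 0 := h1

lemma charsum (v u : K) :
    ∑ x : K, sgn (Algebra.trace (ZMod 2) K (v + x * u)) =
      if u = 0 then (Fintype.card K : ℤ) * sgn (Algebra.trace (ZMod 2) K v) else 0 := by
  have hsplit : ∀ x : K, sgn (Algebra.trace (ZMod 2) K (v + x * u))
      = sgn (Algebra.trace (ZMod 2) K v) * sgn (Algebra.trace (ZMod 2) K (x * u)) := by
    intro x; rw [map_add, sgn_add _ _]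
  rw [Finset.sum_congr rfl (fun x _ => hsplit x), ← Finset.mul_sum]
  split_ifs with hu
  · subst hu
    simp [sgn, Finset.sum_const, Finset.card_univ, mul_comm]
  · rw [charsum0 K u hu, mul_zero]

lemma parseval (h : K → K) (b : K) :
    ∑ c : K, (∑ y : K, sgn (Algebra.trace (ZMod 2) K (b * h y + c * y))) ^ 2
      = (Fintype.card K : ℤ) ^ 2 := by
  have hchar : CharP K 2 := charP_of_injective_algebraMap (algebraMap (ZMod 2) K).injective 2
  have step1 : ∀ c : K, (∑ y : K, sgn (Algebra.trace (ZMod 2) K (b * h y + c * y))) ^ 2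
      = ∑ y : K, ∑ z : K,
          sgn (Algebra.trace (ZMod 2) K (b * (h y + h z) + c * (y + z))) := by
    intro c
    rw [sq, Finset.sum_mul_sum]
    refine Finset.sum_congr rfl fun y _ => Finset.sum_congr rfl fun z _ => ?_
    rw [← sgn_add _ _, ← map_add]
    congr 2
    ring
  rw [Finset.sum_congr rfl (fun c _ => step1 c)]
  rw [Finset.sum_comm]
  have step2 : ∀ y : K, ∑ z : K, ∑ c : K,
      sgn (Algebra.trace (ZMod 2) K (b * (h y + h z) + c * (y + z)))
      = (Fintype.card K : ℤ) := by
    intro y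
    have inner : ∀ z : K, ∑ c : K,
        sgn (Algebra.trace (ZMod 2) K (b * (h y + h z) + c * (y + z)))
        = if z = y then (Fintype.card K : ℤ) else 0 := by
      intro z
      rw [charsum K (b * (h y + h z)) (y + z)]
      have hyz : y + z = 0 ↔ z = y := by
        rw [add_eq_zero_iff_eq_neg, CharTwo.neg_eq, eq_comm]
      by_cases hz : z = y
      · subst hz
        rw [if_pos (hyz.mpr rfl), if_pos rfl]
        rw [CharTwo.add_self_eq_zero, mul_zero, map_zero]
        simp [sgn]
      · rw [if_neg (fun hc => hz (hyz.mp hc)), if_neg hz]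
    rw [Finset.sum_congr rfl (fun z _ => inner z)]
    simp
  rw [Finset.sum_congr rfl (fun y _ => Finset.sum_comm.trans (step2 y)), Finset.sum_const,
    Finset.card_univ, nsmul_eq_mul, sq]
end

lemma ncard_filter {α : Type} [Fintype α] (p : α → Prop) [DecidablePred p] :
    {y | p y}.ncard = (Finset.univ.filter p).card := by
  rw [Set.ncard_eq_toFinset_card', Set.toFinset_setOf]

/-- Multiplicity of the minimum weight in Theorem 5.4: for `h` a normalized
vectorial `s`-plateaued function with `s < m`, the number of triples `(a,b,c)` whose codeword
has weight `2^{m-1} − 2^{(m+s-2)/2}` is `2^{2m-s} − 2^{m-s}`. -/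
theorem stmt_15 (m s : ℕ) (hm : 1 ≤ m) (hsm : s < m) (hms : Even (m + s))
    (K : Type) [Field K] [Fintype K] [Algebra (ZMod 2) K]
    (hcard : Fintype.card K = 2 ^ m)
    (h : K → K) (hh0 : h 0 = 0)
    (hplat : ∀ b : K, b ≠ 0 → ∀ c : K,
      (∑ y : K, sgn (Algebra.trace (ZMod 2) K (b * h y + c * y))) ^ 2 ∈
        ({0, 2 ^ (m + s)} : Set ℤ)) :
    {abc : ZMod 2 × K × K |
        {y : K | abc.1 + Algebra.trace (ZMod 2) K (abc.2.1 * h y + abc.2.2 * y) = 1}.ncard =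
          2 ^ (m - 1) - 2 ^ ((m + s - 2) / 2)}.ncard =
      2 ^ (2 * m - s) - 2 ^ (m - s) := by
  classical
  obtain ⟨k, hk⟩ := hms
  have hm2 : 2 ≤ m := by omega
  have hk1 : 1 ≤ k := by omega
  have hkm : k + 1 ≤ m := by omega
  have hexp : (m + s - 2) / 2 = k - 1 := by omega
  have h2k : (0:ℤ) < 2 ^ k := by positivity
  have h2m : (0:ℤ) < 2 ^ m := by positivity
  have h2km : (2:ℤ) ^ k < 2 ^ m := by
    exact pow_lt_pow_right₀ (by norm_num) (by omega)
  -- key equivalence: the weight condition in terms of the Walsh transform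
  have key : ∀ (a : ZMod 2) (b c : K),
      ({y : K | a + Algebra.trace (ZMod 2) K (b * h y + c * y) = 1}.ncard
        = 2 ^ (m - 1) - 2 ^ ((m + s - 2) / 2))
      ↔ ((a = 0 ∧ (∑ y : K, sgn (Algebra.trace (ZMod 2) K (b * h y + c * y))) = 2 ^ k)
        ∨ (a = 1 ∧ (∑ y : K, sgn (Algebra.trace (ZMod 2) K (b * h y + c * y))) = -2 ^ k)) := by
    intro a b c
    rw [ncard_filter, hexp]
    have hsum : (Finset.univ.filter fun y : K =>
          (1 : ZMod 2) + Algebra.trace (ZMod 2) K (b * h y + c * y) = 1).card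
        + (Finset.univ.filter fun y : K =>
          (0 : ZMod 2) + Algebra.trace (ZMod 2) K (b * h y + c * y) = 1).card = 2 ^ m := by
      have hcompl : ∀ t : ZMod 2, ((1 : ZMod 2) + t = 1) ↔ ¬((0 : ZMod 2) + t = 1) := by decide
      have heq : (Finset.univ.filter fun y : K =>
            (1 : ZMod 2) + Algebra.trace (ZMod 2) K (b * h y + c * y) = 1)
          = Finset.univ.filter fun y : K =>
            ¬((0 : ZMod 2) + Algebra.trace (ZMod 2) K (b * h y + c * y) = 1) :=
        Finset.filter_congr (fun y _ => hcompl _)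
      rw [heq, add_comm, Finset.card_filter_add_card_filter_not, Finset.card_univ, hcard]
    have hW : (∑ y : K, sgn (Algebra.trace (ZMod 2) K (b * h y + c * y)))
        = (2 ^ m : ℤ) - 2 * (Finset.univ.filter fun y : K =>
            (0 : ZMod 2) + Algebra.trace (ZMod 2) K (b * h y + c * y) = 1).card := by
      have hsgn : ∀ t : ZMod 2,
          sgn t = 1 - 2 * (if (0 : ZMod 2) + t = 1 then (1:ℤ) else 0) := by decide
      rw [Finset.sum_congr rfl (fun y _ => hsgn _), Finset.sum_sub_distrib, Finset.sum_const,
        Finset.card_univ, hcard, ← Finset.mul_sum, Finset.sum_boole]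
      push_cast
      ring
    have hle : (2:ℕ) ^ (k - 1) ≤ 2 ^ (m - 1) := Nat.pow_le_pow_right (by norm_num) (by omega)
    have e1 : (2:ℤ) ^ m = 2 * 2 ^ (m - 1) := by
      rw [← pow_succ']; congr 1; omega
    have e2 : (2:ℤ) ^ k = 2 * 2 ^ (k - 1) := by
      rw [← pow_succ']; congr 1; omega
    have ha : a = 0 ∨ a = 1 := by
      have : ∀ x : ZMod 2, x = 0 ∨ x = 1 := by decide
      exact this a
    rcases ha with rfl | rfl
    · have h01 : ¬((0 : ZMod 2) = 1) := by decide
      simp only [h01, false_and, or_false, true_and]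
      rw [hW, e1, e2]
      zify [hle]
      constructor
      · intro hN; linarith
      · intro hN; linarith
    · have h10 : ¬((1 : ZMod 2) = 0) := by decide
      simp only [h10, false_and, false_or, true_and]
      rw [hW, e1, e2]
      zify [hle] at hsum ⊢
      constructor
      · intro hN; linarith
      · intro hN; linarith
  -- number of c with nonzero Walsh value, for each b ≠ 0
  have hcount : ∀ b : K, b ≠ 0 →
      (Finset.univ.filter fun c : K =>
        (∑ y : K, sgn (Algebra.trace (ZMod 2) K (b * h y + c * y))) ≠ 0).card = 2 ^ (m - s) := by
    intro b hb
    have hpars := parseval K h b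
    rw [hcard] at hpars
    have hsub : ∑ c ∈ Finset.univ.filter (fun c : K =>
          (∑ y : K, sgn (Algebra.trace (ZMod 2) K (b * h y + c * y))) ≠ 0),
          (∑ y : K, sgn (Algebra.trace (ZMod 2) K (b * h y + c * y))) ^ 2
        = ∑ c : K, (∑ y : K, sgn (Algebra.trace (ZMod 2) K (b * h y + c * y))) ^ 2 := by
      apply Finset.sum_filter_of_ne
      intro c _ hc h0
      exact hc (by rw [h0]; ring)
    have hval : ∀ c ∈ Finset.univ.filter (fun c : K =>
          (∑ y : K, sgn (Algebra.trace (ZMod 2) K (b * h y + c * y))) ≠ 0),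
        (∑ y : K, sgn (Algebra.trace (ZMod 2) K (b * h y + c * y))) ^ 2 = 2 ^ (m + s) := by
      intro c hc
      have hp := hplat b hb c
      simp only [Set.mem_insert_iff, Set.mem_singleton_iff] at hp
      rcases hp with h0 | h2
      · exact absurd (pow_eq_zero_iff (by norm_num) |>.mp h0)
          (Finset.mem_filter.mp hc).2
      · exact h2
    rw [Finset.sum_congr rfl hval, Finset.sum_const, nsmul_eq_mul] at hsub
    have hrhs : ((2:ℕ) ^ (m - s) : ℤ) * 2 ^ (m + s) = (((2:ℕ) ^ m : ℕ) : ℤ) ^ 2 := by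
      push_cast
      rw [← pow_add, ← pow_mul]
      congr 1
      omega
    have hcancel := mul_right_cancel₀ (a := ((Finset.univ.filter fun c : K =>
          (∑ y : K, sgn (Algebra.trace (ZMod 2) K (b * h y + c * y))) ≠ 0).card : ℤ))
      (b := (2:ℤ) ^ (m + s)) (c := ((2:ℕ) ^ (m - s) : ℤ))
      (by positivity) (hsub.trans (hpars.trans hrhs.symm))
    exact_mod_cast hcancel
  -- pointwise identities
  have hpoint : ∀ b : K, b ≠ 0 → ∀ c : K,
      ((if (∑ y : K, sgn (Algebra.trace (ZMod 2) K (b * h y + c * y))) = 2 ^ k then (1:ℕ) else 0)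
        + (if (∑ y : K, sgn (Algebra.trace (ZMod 2) K (b * h y + c * y))) = -2 ^ k then 1 else 0))
      = if (∑ y : K, sgn (Algebra.trace (ZMod 2) K (b * h y + c * y))) ≠ 0 then 1 else 0 := by
    intro b hb c
    by_cases hw : (∑ y : K, sgn (Algebra.trace (ZMod 2) K (b * h y + c * y))) = 0
    · rw [hw]
      rw [if_neg (by intro hc; rw [← hc] at h2k; exact lt_irrefl _ h2k),
        if_neg (by intro hc; nlinarith), if_neg (by simp)]
    · have hp := hplat b hb c
      simp only [Set.mem_insert_iff, Set.mem_singleton_iff] at hp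
      rcases hp with h0 | h2
      · exact absurd (pow_eq_zero_iff (by norm_num) |>.mp h0) hw
      · have hA2 : (2:ℤ) ^ k * 2 ^ k = 2 ^ (m + s) := by
          rw [← pow_add]; congr 1; omega
        have hfac : ((∑ y : K, sgn (Algebra.trace (ZMod 2) K (b * h y + c * y))) - 2 ^ k)
            * ((∑ y : K, sgn (Algebra.trace (ZMod 2) K (b * h y + c * y))) + 2 ^ k) = 0 := by
          linear_combination h2 - hA2
        rw [if_pos hw]
        rcases mul_eq_zero.mp hfac with hf | hf
        · have hWA : (∑ y : K, sgn (Algebra.trace (ZMod 2) K (b * h y + c * y))) = 2 ^ k := by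
            linarith
          rw [if_pos hWA, if_neg (by rw [hWA]; intro hc; linarith)]
        · have hWA : (∑ y : K, sgn (Algebra.trace (ZMod 2) K (b * h y + c * y))) = -2 ^ k := by
            linarith
          rw [if_pos hWA, if_neg (by rw [hWA]; intro hc; linarith)]
  have hzero : ∀ c : K,
      ((if (∑ y : K, sgn (Algebra.trace (ZMod 2) K ((0:K) * h y + c * y))) = 2 ^ k then (1:ℕ) else 0)
        + (if (∑ y : K, sgn (Algebra.trace (ZMod 2) K ((0:K) * h y + c * y))) = -2 ^ k then 1 else 0))
      = 0 := by
    intro c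
    have hW0 : (∑ y : K, sgn (Algebra.trace (ZMod 2) K ((0:K) * h y + c * y)))
        = if c = 0 then ((2:ℤ) ^ m) else 0 := by
      have harg : ∀ y : K, (0:K) * h y + c * y = 0 + y * c := fun y => by ring
      rw [Finset.sum_congr rfl (fun y _ => by rw [harg y]), charsum K 0 c, map_zero]
      simp [sgn, hcard]
    rw [hW0]
    by_cases hc : c = 0
    · rw [if_pos hc, if_neg (by intro hx; exact absurd hx h2km.ne'),
        if_neg (by intro hx; nlinarith)]
    · rw [if_neg hc, if_neg (by intro hx; rw [← hx] at h2k; exact lt_irrefl _ h2k),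
        if_neg (by intro hx; nlinarith)]
  -- assemble
  rw [ncard_filter]
  have hfilter : (Finset.univ.filter fun abc : ZMod 2 × K × K =>
      {y : K | abc.1 + Algebra.trace (ZMod 2) K (abc.2.1 * h y + abc.2.2 * y) = 1}.ncard =
          2 ^ (m - 1) - 2 ^ ((m + s - 2) / 2))
      = Finset.univ.filter fun abc : ZMod 2 × K × K =>
        ((abc.1 = 0 ∧ (∑ y : K, sgn (Algebra.trace (ZMod 2) K (abc.2.1 * h y + abc.2.2 * y))) = 2 ^ k)
          ∨ (abc.1 = 1 ∧ (∑ y : K, sgn (Algebra.trace (ZMod 2) K (abc.2.1 * h y + abc.2.2 * y))) = -2 ^ k)) :=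
    Finset.filter_congr fun abc _ => key abc.1 abc.2.1 abc.2.2
  rw [hfilter, Finset.card_filter, Fintype.sum_prod_type]
  have hZ : ∀ f : ZMod 2 → ℕ, ∑ a : ZMod 2, f a = f 0 + f 1 := by
    intro f
    have hu : (Finset.univ : Finset (ZMod 2)) = {0, 1} := by decide
    rw [hu, Finset.sum_insert (by decide), Finset.sum_singleton]
  rw [hZ]
  have d1 : ((0:ZMod 2) = 1) ↔ False := by decide
  have d2 : ((1:ZMod 2) = 0) ↔ False := by decide
  simp only [d1, d2, false_and, or_false, false_or, true_and, eq_self_iff_true]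
  rw [← Finset.sum_add_distrib, Fintype.sum_prod_type]
  have hbsum : ∀ b : K,
      (∑ c : K,
        ((if (∑ y : K, sgn (Algebra.trace (ZMod 2) K (b * h y + c * y))) = 2 ^ k then (1:ℕ) else 0)
          + (if (∑ y : K, sgn (Algebra.trace (ZMod 2) K (b * h y + c * y))) = -2 ^ k then 1 else 0)))
      = if b = 0 then 0 else 2 ^ (m - s) := by
    intro b
    by_cases hb : b = 0
    · subst hb
      rw [if_pos rfl, Finset.sum_congr rfl (fun c _ => hzero c), Finset.sum_const,
        smul_eq_mul, mul_zero]
    · rw [if_neg hb, Finset.sum_congr rfl (fun c _ => hpoint b hb c), ← Finset.card_filter,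
        hcount b hb]
  rw [Finset.sum_congr rfl (fun b _ => hbsum b), Finset.sum_ite, Finset.sum_const_zero,
    zero_add, Finset.sum_const, smul_eq_mul]
  have hcardb : (Finset.univ.filter fun b : K => ¬b = 0).card = 2 ^ m - 1 := by
    have he : (Finset.univ.filter fun b : K => ¬b = 0) = Finset.univ.erase 0 :=
      Finset.filter_ne' _ _
    rw [he, Finset.card_erase_of_mem (Finset.mem_univ 0), Finset.card_univ, hcard]
  rw [hcardb, Nat.sub_mul, one_mul, ← pow_add, show m + (m - s) = 2 * m - s from by omega]
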